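/- If G is a forest, then the alternating sum Σ_{σ} (-1)^{|σ|}, taken over all independent sets σ of G (including the empty set), lies in {-1, 0, 1}. -/

import Mathlib

open Finset

attribute [local instance] Classical.propDecidable

/-- `s` is an independent set of the graph `G`. -/
def SimpleGraph.IsIndep {V : Type*} (G : SimpleGraph V) (s : Finset V) : Prop :=
  ∀ u ∈ s, ∀ v ∈ s, ¬ G.Adj u v

/-!
Write `I(A)` for the alternating sum over the independent subsets of `A`. Splitting according to
whether a vertex `u ∈ A` is used gives `I(A) = I(A - u) - I(A - N[u])`. If `v` is isolated in
`G[A]`, the two terms coincide for `u = v`, so `I(A) = 0`. Otherwise the forest `G[A]` has a leaf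
`v` with neighbour `u`; then `v` is isolated in `A - u`, so `I(A) = -I(A - N[u])`, and induction on
`A` shows `|I(A)| ≤ 1`.
-/

namespace SimpleGraph

variable {V : Type*} {G : SimpleGraph V}

theorem IsAcyclic.exists_existsUnique_adj [Finite V] [Nonempty V] (hG : G.IsAcyclic)
    (h : ∀ v, ∃ w, G.Adj v w) : ∃ v, ∃! w, G.Adj v w := by
  obtain ⟨u, v, p, hp, hmax⟩ := Walk.exists_isPath_forall_isPath_length_le_length G
  have hnil : ¬p.Nil := by
    obtain ⟨w, hw⟩ := h u
    exact Walk.not_nil_iff_lt_length.mpr (hmax _ _ _ (Path.singleton hw).2)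
  refine ⟨u, p.snd, p.adj_snd hnil, fun w hw ↦ hG.eq_snd_of_adj_start hp hw ?_⟩
  by_contra hw'
  have := hmax _ _ _ (hp.cons hw' (h := hw.symm))
  simp at this

theorem isIndep_insert {u : V} {t : Finset V} :
    G.IsIndep (insert u t) ↔ G.IsIndep t ∧ ∀ x ∈ t, ¬G.Adj u x := by
  simp only [IsIndep, mem_insert, forall_eq_or_imp, G.irrefl, not_false_eq_true, true_and]
  grind [Adj.symm]

theorem IsAcyclic.exists_leaf_of_forall_exists_adj (hG : G.IsAcyclic) {A : Finset V}
    (hA : A.Nonempty) (h : ∀ v ∈ A, ∃ w ∈ A, G.Adj v w) :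
    ∃ v ∈ A, ∃ u ∈ A, G.Adj v u ∧ ∀ w ∈ A, G.Adj v w → w = u := by
  have : Nonempty (A : Set V) := hA.to_subtype
  obtain ⟨⟨v, hv⟩, ⟨u, hu⟩, hvu, huniq⟩ := (hG.induce A).exists_existsUnique_adj
    fun ⟨v, hv⟩ ↦ (h v hv).elim fun w ⟨hw, hvw⟩ ↦ ⟨⟨w, hw⟩, hvw⟩
  exact ⟨v, hv, u, hu, hvu, fun w hw hvw ↦ congrArg Subtype.val (huniq ⟨w, hw⟩ hvw)⟩

noncomputable def indepAltSum (G : SimpleGraph V) (A : Finset V) : ℤ :=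
  ∑ s ∈ A.powerset.filter G.IsIndep, (-1) ^ s.card

theorem indepAltSum_empty : G.indepAltSum ∅ = 1 := by
  have : G.IsIndep ∅ := by simp [IsIndep]
  simp [indepAltSum, filter_singleton, this]

theorem indepAltSum_eq_sub {A : Finset V} {u : V} (hu : u ∈ A) :
    G.indepAltSum A =
      G.indepAltSum (A.erase u) - G.indepAltSum ((A.erase u).filter (¬G.Adj u ·)) := by
  set f : Finset V → ℤ := fun t ↦ if G.IsIndep t then (-1) ^ t.card else 0
  have hsum (B : Finset V) : G.indepAltSum B = ∑ t ∈ B.powerset, f t := sum_filter _ _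
  have hinsert : ∑ t ∈ (A.erase u).powerset, f (insert u t) =
      ∑ t ∈ ((A.erase u).filter (¬G.Adj u ·)).powerset, f (insert u t) := by
    refine (sum_subset (powerset_mono.mpr (filter_subset _ _)) fun t ht hnt ↦ ?_).symm
    obtain ⟨x, hxt, hux⟩ : ∃ x ∈ t, G.Adj u x := by
      simp only [mem_powerset, subset_iff, mem_filter, not_forall] at ht hnt
      grind
    simp only [f, isIndep_insert]
    exact if_neg fun h ↦ h.2 x hxt hux
  conv_lhs => rw [hsum, ← insert_erase hu, sum_powerset_insert (notMem_erase u A), hinsert]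
  rw [hsum, hsum, sub_eq_add_neg, ← sum_neg_distrib]
  congr 1
  refine sum_congr rfl fun t ht ↦ ?_
  simp only [mem_powerset, subset_iff, mem_filter, mem_erase] at ht
  have hut : u ∉ t := fun h ↦ (ht h).1.1 rfl
  simp only [f, isIndep_insert, card_insert_of_notMem hut, pow_succ]
  grind

theorem indepAltSum_eq_zero_of_forall_not_adj {A : Finset V} {v : V} (hv : v ∈ A)
    (h : ∀ w ∈ A, ¬G.Adj v w) : G.indepAltSum A = 0 := by
  rw [indepAltSum_eq_sub hv, filter_true_of_mem fun w hw ↦ h w (mem_of_mem_erase hw), sub_self]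

theorem indepAltSum_eq_neg_of_forall_adj_eq {A : Finset V} {u v : V} (hu : u ∈ A) (hv : v ∈ A)
    (hvu : v ≠ u) (h : ∀ w ∈ A, G.Adj v w → w = u) :
    G.indepAltSum A = -G.indepAltSum ((A.erase u).filter (¬G.Adj u ·)) := by
  rw [indepAltSum_eq_sub hu, indepAltSum_eq_zero_of_forall_not_adj (mem_erase.mpr ⟨hvu, hv⟩)
    fun w hw hvw ↦ (mem_erase.mp hw).1 (h w (mem_of_mem_erase hw) hvw), zero_sub]

theorem IsAcyclic.abs_indepAltSum_le_one (hG : G.IsAcyclic) (A : Finset V) :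
    |G.indepAltSum A| ≤ 1 := by
  induction A using Finset.strongInduction with
  | H A ih =>
    obtain rfl | hA := A.eq_empty_or_nonempty
    · simp [indepAltSum_empty]
    by_cases hiso : ∃ v ∈ A, ∀ w ∈ A, ¬G.Adj v w
    · obtain ⟨v, hv, h⟩ := hiso
      simp [indepAltSum_eq_zero_of_forall_not_adj hv h]
    push Not at hiso
    obtain ⟨v, hv, u, hu, hvu, h⟩ := hG.exists_leaf_of_forall_exists_adj hA hiso
    rw [indepAltSum_eq_neg_of_forall_adj_eq hu hv hvu.ne h, abs_neg]
    exact ih _ ((filter_subset _ _).trans_ssubset (erase_ssubset hu))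

end SimpleGraph

/-- If `G` is a forest, the alternating sum `∑_{σ independent} (-1)^{|σ|}`
(over all independent sets including `∅`) lies in `{-1, 0, 1}`. -/
theorem alternating_sum_indep_forest {V : Type*} [Fintype V]
    (G : SimpleGraph V) (hG : G.IsAcyclic) :
    (∑ s ∈ Finset.univ.filter G.IsIndep, (-1 : ℤ) ^ s.card) ∈ ({-1, 0, 1} : Set ℤ) := by
  have h := abs_le.mp (hG.abs_indepAltSum_le_one univ)
  rw [SimpleGraph.indepAltSum, powerset_univ] at h
  simp only [Set.mem_insert_iff, Set.mem_singleton_iff]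
  omega
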